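/- (Birkhoff contraction) Let C₁, C₂ be closed convex cones in Banach spaces E₁, E₂ with projective metrics Θ₁, Θ₂, and let L: E₁ → E₂ be linear with L(C₁) ⊂ C₂. If Δ = diam_{Θ₂}(L(C₁)) < ∞, then Θ₂(L(v), L(w)) ≤ (1 − e^{−Δ})·Θ₁(v,w) for all v, w ∈ C₁. -/

import Mathlib

open scoped ENNReal

/-- A cone in `E` (a subset of `E ∖ {0}` with `C ∩ (−C) = ∅` closed under positive scaling). -/
def IsCone {E : Type*} [NormedAddCommGroup E] [NormedSpace ℝ E] (C : Set E) : Prop :=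
  (0 : E) ∉ C ∧ (∀ v ∈ C, ∀ t : ℝ, 0 < t → t • v ∈ C) ∧ ∀ v ∈ C, -v ∉ C

/-- A convex cone. -/
def IsConvexCone {E : Type*} [NormedAddCommGroup E] [NormedSpace ℝ E] (C : Set E) : Prop :=
  IsCone C ∧ ∀ v ∈ C, ∀ w ∈ C, ∀ s t : ℝ, 0 < s → 0 < t → s • v + t • w ∈ C

/-- A closed cone: its closure (in the sense of limits `w + λₙ • v ∈ C`, `λₙ → 0`)
equals `C ∪ {0}`. -/
def IsClosedCone {E : Type*} [NormedAddCommGroup E] [NormedSpace ℝ E] (C : Set E) : Prop :=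
  ∀ w v : E, v ∈ C → ∀ l : ℕ → ℝ, Filter.Tendsto l Filter.atTop (nhds 0) →
    (∀ n, w + l n • v ∈ C) → w ∈ C ∨ w = 0

/-- `A(v,w) = sup{t>0 : w − t•v ∈ C}` (with `sup ∅ = 0`). -/
noncomputable def coneA {E : Type*} [NormedAddCommGroup E] [NormedSpace ℝ E]
    (C : Set E) (v w : E) : ℝ :=
  sSup {t : ℝ | 0 < t ∧ w - t • v ∈ C}

/-- `B(v,w) = inf{s>0 : s•v − w ∈ C}` (as a real number, when the set is nonempty). -/
noncomputable def coneB {E : Type*} [NormedAddCommGroup E] [NormedSpace ℝ E]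
    (C : Set E) (v w : E) : ℝ :=
  sInf {s : ℝ | 0 < s ∧ s • v - w ∈ C}

open scoped Classical in
/-- The projective (pseudo-)metric `Θ(v,w) = log (B(v,w)/A(v,w)) ∈ [0,+∞]` of a cone,
with the conventions `sup ∅ = 0`, `inf ∅ = +∞`, `log(+∞/a) = +∞`, `log(b/0) = +∞`. -/
noncomputable def projMetric {E : Type*} [NormedAddCommGroup E] [NormedSpace ℝ E]
    (C : Set E) (v w : E) : ℝ≥0∞ :=
  if {t : ℝ | 0 < t ∧ w - t • v ∈ C}.Nonempty ∧ {s : ℝ | 0 < s ∧ s • v - w ∈ C}.Nonempty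
  then ENNReal.ofReal (Real.log (coneB C v w / coneA C v w))
  else ⊤

/-! If `w - t v` and `s v - w` lie in `C₁`, their images `x, y` satisfy `Θ₂(x, y) ≤ Δ`: there
are `u ≤ u'` with `u' / u` nearly at most `e^Δ`, `y - u x ∈ C₂` and `u' x - y ∈ C₂`. Expanded,
these say that `(s + u t) / (1 + u)` and `(s + u' t) / (1 + u')` are admissible upper and lower
constants for `(Lv, Lw)`, and a one-variable monotonicity argument bounds the logarithm of their
ratio by `(1 - u / u') log (s / t)`. Optimising over `u, u'` and then over `t, s` gives the factor
`1 - e^{-Δ}`. -/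

open Real Set

lemma log_div_le_mul_log_div {s t u u' : ℝ} (ht : 0 < t) (hts : t ≤ s) (hu : 0 < u)
    (huu' : u ≤ u') :
    log ((s + u * t) / (1 + u) / ((s + u' * t) / (1 + u'))) ≤ (1 - u / u') * log (s / t) := by
  have hs : 0 < s := ht.trans_le hts
  have hu' : 0 < u' := hu.trans_le huu'
  -- `x ↦ log ((s + u x) / (s + u' x)) + (1 - u / u') log x` is monotone on `x > 0`;
  -- compare its values at `t` and `s`.
  set Φ : ℝ → ℝ := fun x => log (s + u * x) - log (s + u' * x) + (1 - u / u') * log x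
  have hΦ : ∀ x ∈ Ioi (0 : ℝ), HasDerivAt Φ
      (u * 1 / (s + u * x) - u' * 1 / (s + u' * x) + (1 - u / u') * x⁻¹) x := by
    intro x (hx : 0 < x)
    exact ((((hasDerivAt_id x).const_mul u).const_add s).log (by positivity)).sub
      ((((hasDerivAt_id x).const_mul u').const_add s).log (by positivity)) |>.add
      ((hasDerivAt_log hx.ne').const_mul _)
  have hmono : MonotoneOn Φ (Ioi 0) := by
    refine monotoneOn_of_hasDerivWithinAt_nonneg (convex_Ioi 0)
      (fun x hx => (hΦ x hx).continuousAt.continuousWithinAt)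
      (fun x hx => (hΦ x (interior_subset hx)).hasDerivWithinAt) fun x hx => ?_
    rw [interior_Ioi] at hx
    have hx : 0 < x := hx
    have key : u * 1 / (s + u * x) - u' * 1 / (s + u' * x) + (1 - u / u') * x⁻¹
        = (u' - u) * (s ^ 2 + u * s * x + u * u' * x ^ 2)
          / (u' * x * (s + u * x) * (s + u' * x)) := by
      field_simp
      ring
    rw [key]
    have : 0 ≤ u' - u := sub_nonneg.2 huu'
    positivity
  have hΦts := hmono ht hs hts
  simp only [Φ] at hΦts
  have e : s + u * s = s * (1 + u) := by ring
  have e' : s + u' * s = s * (1 + u') := by ring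
  rw [e, e', log_mul hs.ne' (by positivity), log_mul hs.ne' (by positivity)] at hΦts
  rw [log_div (by positivity) (by positivity), log_div (by positivity) (by positivity),
    log_div (by positivity) (by positivity), log_div hs.ne' ht.ne']
  linarith

lemma csSup_le_mul_csInf {S T : Set ℝ} {j : ℝ} (hS : S.Nonempty) (hT : T.Nonempty) (hj : 0 < j)
    (h : ∀ u ∈ S, ∀ u' ∈ T, u ≤ j * u') : sSup S ≤ j * sInf T :=
  csSup_le hS fun u hu =>
    (div_le_iff₀' hj).mp (le_csInf hT fun u' hu' => (div_le_iff₀' hj).mpr (h u hu u' hu'))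

lemma le_mul_log_csInf_div_csSup {S T : Set ℝ} {Z c : ℝ} (hc : 0 ≤ c) (hS : S.Nonempty)
    (hT : T.Nonempty) (hSpos : ∀ t ∈ S, 0 < t) (hTpos : ∀ s ∈ T, 0 < s)
    (h : ∀ t ∈ S, ∀ s ∈ T, Z ≤ c * log (s / t)) : Z ≤ c * log (sInf T / sSup S) := by
  obtain ⟨t₀, ht₀⟩ := hS
  obtain ⟨s₀, hs₀⟩ := hT
  rcases hc.eq_or_lt with rfl | hc
  · simpa using h t₀ ht₀ s₀ hs₀
  have hts : ∀ t ∈ S, ∀ s ∈ T, t ≤ exp (-(Z / c)) * s := fun t ht s hs => by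
    have hZ := (le_log_iff_exp_le (div_pos (hTpos s hs) (hSpos t ht))).mp
      ((div_le_iff₀' hc).mpr (h t ht s hs))
    rw [le_div_iff₀ (hSpos t ht)] at hZ
    rw [exp_neg, ← div_eq_inv_mul, le_div_iff₀' (exp_pos _)]
    linarith
  have hSup : 0 < sSup S := (hSpos t₀ ht₀).trans_le
    (le_csSup ⟨_, fun t ht => hts t ht s₀ hs₀⟩ ht₀)
  have hAB := csSup_le_mul_csInf ⟨t₀, ht₀⟩ ⟨s₀, hs₀⟩ (exp_pos _) hts
  rw [exp_neg, ← div_eq_inv_mul, le_div_iff₀' (exp_pos _)] at hAB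
  have hInf : 0 < sInf T := (mul_pos (exp_pos _) hSup).trans_le hAB
  rw [← div_le_iff₀' hc, le_log_iff_exp_le (div_pos hInf hSup), le_div_iff₀ hSup]
  linarith

section Cone

variable {E : Type*} [NormedAddCommGroup E] [NormedSpace ℝ E] {C : Set E} {v w : E} {t s : ℝ}

lemma projMetric_of_nonempty (hA : {t : ℝ | 0 < t ∧ w - t • v ∈ C}.Nonempty)
    (hB : {s : ℝ | 0 < s ∧ s • v - w ∈ C}.Nonempty) :
    projMetric C v w = ENNReal.ofReal (log (coneB C v w / coneA C v w)) :=
  if_pos ⟨hA, hB⟩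

lemma projMetric_of_not_nonempty
    (h : ¬({t : ℝ | 0 < t ∧ w - t • v ∈ C}.Nonempty ∧
      {s : ℝ | 0 < s ∧ s • v - w ∈ C}.Nonempty)) :
    projMetric C v w = ⊤ :=
  if_neg h

lemma coneB_le (hs : 0 < s) (hsw : s • v - w ∈ C) : coneB C v w ≤ s :=
  csInf_le ⟨0, fun _ hx => hx.1.le⟩ ⟨hs, hsw⟩

namespace IsConvexCone

lemma smul_mem (hC : IsConvexCone C) (hv : v ∈ C) (ht : 0 < t) : t • v ∈ C :=
  hC.1.2.1 v hv t ht

lemma add_mem (hC : IsConvexCone C) (hv : v ∈ C) (hw : w ∈ C) : v + w ∈ C := by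
  simpa using hC.2 v hv w hw 1 1 one_pos one_pos

lemma lt_of_sub_smul_mem_of_smul_sub_mem (hC : IsConvexCone C) (hv : v ∈ C) (ht : 0 < t)
    (hwt : w - t • v ∈ C) (hsw : s • v - w ∈ C) : t < s := by
  by_contra! hst
  have hsum : (s - t) • v ∈ C := by
    convert hC.add_mem hwt hsw using 1
    module
  rcases hst.eq_or_lt with rfl | hst
  · exact hC.1.1 (by simpa using hsum)
  · exact hC.1.2.2 _ (hC.smul_mem hv (sub_pos.2 hst)) (by convert hsum using 1; module)

lemma le_coneA (hC : IsConvexCone C) (hv : v ∈ C) (ht : 0 < t) (hwt : w - t • v ∈ C)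
    (hsw : s • v - w ∈ C) : t ≤ coneA C v w :=
  le_csSup ⟨s, fun _ hx => (hC.lt_of_sub_smul_mem_of_smul_sub_mem hv hx.1 hx.2 hsw).le⟩
    ⟨ht, hwt⟩

lemma coneA_pos (hC : IsConvexCone C) (hv : v ∈ C) (ht : 0 < t) (hwt : w - t • v ∈ C)
    (hsw : s • v - w ∈ C) : 0 < coneA C v w :=
  ht.trans_le (hC.le_coneA hv ht hwt hsw)

lemma coneA_le_coneB (hC : IsConvexCone C) (hv : v ∈ C)
    (hA : {t : ℝ | 0 < t ∧ w - t • v ∈ C}.Nonempty)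
    (hB : {s : ℝ | 0 < s ∧ s • v - w ∈ C}.Nonempty) : coneA C v w ≤ coneB C v w :=
  csSup_le hA fun _ ht => le_csInf hB fun _ hs =>
    (hC.lt_of_sub_smul_mem_of_smul_sub_mem hv ht.1 ht.2 hs.2).le

lemma exp_neg_mul_coneB_le_coneA (hC : IsConvexCone C) (hv : v ∈ C)
    (hA : {t : ℝ | 0 < t ∧ w - t • v ∈ C}.Nonempty)
    (hB : {s : ℝ | 0 < s ∧ s • v - w ∈ C}.Nonempty) {d : ℝ} (hd : 0 ≤ d)
    (h : projMetric C v w ≤ ENNReal.ofReal d) : exp (-d) * coneB C v w ≤ coneA C v w := by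
  obtain ⟨t, ht, hwt⟩ := hA
  obtain ⟨s, hs, hsw⟩ := hB
  have hApos := hC.coneA_pos hv ht hwt hsw
  have hBpos := hApos.trans_le (hC.coneA_le_coneB hv ⟨t, ht, hwt⟩ ⟨s, hs, hsw⟩)
  rw [projMetric_of_nonempty ⟨t, ht, hwt⟩ ⟨s, hs, hsw⟩, ENNReal.ofReal_le_ofReal_iff hd,
    log_le_iff_le_exp (div_pos hBpos hApos), div_le_iff₀ hApos] at h
  rw [exp_neg, ← div_eq_inv_mul, div_le_iff₀' (exp_pos _)]
  exact h

lemma log_coneB_div_coneA_le (hC : IsConvexCone C) (hv : v ∈ C) (ht : 0 < t)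
    (hwt : w - t • v ∈ C) (hsw : s • v - w ∈ C) {u u' : ℝ} (hu : 0 < u)
    (hu_mem : (s • v - w) - u • (w - t • v) ∈ C)
    (hu'_mem : u' • (w - t • v) - (s • v - w) ∈ C) :
    log (coneB C v w / coneA C v w) ≤ (1 - u / u') * log (s / t) := by
  have hts := hC.lt_of_sub_smul_mem_of_smul_sub_mem hv ht hwt hsw
  have huu' := hC.lt_of_sub_smul_mem_of_smul_sub_mem hwt hu hu_mem hu'_mem
  have hs : 0 < s := ht.trans hts
  have hu' : 0 < u' := hu.trans huu'
  have hP : ((s + u * t) / (1 + u)) • v - w ∈ C := by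
    convert hC.smul_mem hu_mem (inv_pos.2 (by positivity : 0 < 1 + u)) using 1
    match_scalars <;> field_simp <;> ring
  have hQ : w - ((s + u' * t) / (1 + u')) • v ∈ C := by
    convert hC.smul_mem hu'_mem (inv_pos.2 (by positivity : 0 < 1 + u')) using 1
    match_scalars <;> field_simp <;> ring
  set P := (s + u * t) / (1 + u)
  set Q := (s + u' * t) / (1 + u')
  have hPpos : 0 < P := by positivity
  have hQpos : 0 < Q := by positivity
  have hApos := hC.coneA_pos hv hQpos hQ hsw
  have hAB := hC.coneA_le_coneB hv ⟨Q, hQpos, hQ⟩ ⟨P, hPpos, hP⟩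
  calc log (coneB C v w / coneA C v w)
      ≤ log (P / Q) := log_le_log (div_pos (hApos.trans_le hAB) hApos)
        (div_le_div₀ hPpos.le (coneB_le hPpos hP) hQpos (hC.le_coneA hv hQpos hQ hsw))
    _ ≤ (1 - u / u') * log (s / t) := log_div_le_mul_log_div ht hts.le hu huu'.le

lemma log_coneB_div_coneA_le_of_projMetric_le (hC : IsConvexCone C) (hv : v ∈ C) (ht : 0 < t)
    (hwt : w - t • v ∈ C) (hsw : s • v - w ∈ C) {d : ℝ} (hd : 0 ≤ d)
    (hΘ : projMetric C (w - t • v) (s • v - w) ≤ ENNReal.ofReal d) :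
    log (coneB C v w / coneA C v w) ≤ (1 - exp (-d)) * log (s / t) := by
  have hm : 0 < log (s / t) :=
    log_pos ((one_lt_div ht).2 (hC.lt_of_sub_smul_mem_of_smul_sub_mem hv ht hwt hsw))
  obtain ⟨hA, hB⟩ : {u : ℝ | 0 < u ∧ (s • v - w) - u • (w - t • v) ∈ C}.Nonempty ∧
      {u' : ℝ | 0 < u' ∧ u' • (w - t • v) - (s • v - w) ∈ C}.Nonempty := by
    by_contra h
    rw [projMetric_of_not_nonempty h] at hΘ
    simp at hΘ
  set Z := log (coneB C v w / coneA C v w)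
  have hj : ∀ u ∈ {u : ℝ | 0 < u ∧ (s • v - w) - u • (w - t • v) ∈ C},
      ∀ u' ∈ {u' : ℝ | 0 < u' ∧ u' • (w - t • v) - (s • v - w) ∈ C},
        u ≤ (1 - Z / log (s / t)) * u' := by
    rintro u ⟨hu, hu_mem⟩ u' ⟨hu', hu'_mem⟩
    have hZ := hC.log_coneB_div_coneA_le hv ht hwt hsw hu hu_mem hu'_mem
    rwa [← div_le_iff₀ hm, le_sub_comm, div_le_iff₀ hu'] at hZ
  obtain ⟨u₀, hu₀, hu₀_mem⟩ := id hA
  obtain ⟨u₁, hu₁, hu₁_mem⟩ := id hB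
  have hjpos : 0 < 1 - Z / log (s / t) :=
    pos_of_mul_pos_left (hu₀.trans_le (hj u₀ ⟨hu₀, hu₀_mem⟩ u₁ ⟨hu₁, hu₁_mem⟩)) hu₁.le
  have hbpos :=
    (hC.coneA_pos hwt hu₀ hu₀_mem hu₁_mem).trans_le (hC.coneA_le_coneB hwt hA hB)
  have hexp : exp (-d) ≤ 1 - Z / log (s / t) := le_of_mul_le_mul_right
    ((hC.exp_neg_mul_coneB_le_coneA hwt hA hB hd hΘ).trans (csSup_le_mul_csInf hA hB hjpos hj))
    hbpos
  rwa [le_sub_comm, div_le_iff₀ hm] at hexp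

end IsConvexCone

end Cone

theorem stmt7_general {E₁ E₂ : Type*} [NormedAddCommGroup E₁] [NormedSpace ℝ E₁]
    [NormedAddCommGroup E₂] [NormedSpace ℝ E₂]
    (C₁ : Set E₁) (C₂ : Set E₂)
    (hC₂ : IsConvexCone C₂)
    (L : E₁ →ₗ[ℝ] E₂) (hL : ∀ v ∈ C₁, L v ∈ C₂)
    (Δ : ℝ≥0∞)
    (hΔ : Δ = ⨆ v ∈ C₁, ⨆ w ∈ C₁, projMetric C₂ (L v) (L w))
    (hΔfin : Δ ≠ ⊤) :
    ∀ v ∈ C₁, ∀ w ∈ C₁,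
      projMetric C₂ (L v) (L w) ≤
        ENNReal.ofReal (1 - Real.exp (-Δ.toReal)) * projMetric C₁ v w := by
  intro v hv w hw
  have hbound : ∀ x ∈ C₁, ∀ y ∈ C₁, projMetric C₂ (L x) (L y) ≤ ENNReal.ofReal Δ.toReal := by
    rw [ENNReal.ofReal_toReal hΔfin, hΔ]
    exact fun x hx y hy => le_iSup₂_of_le x hx (le_iSup₂_of_le y hy le_rfl)
  have hc : 0 ≤ 1 - exp (-Δ.toReal) := sub_nonneg.2 (exp_le_one_iff.2 (by simp))
  by_cases hne : {t : ℝ | 0 < t ∧ w - t • v ∈ C₁}.Nonempty ∧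
      {s : ℝ | 0 < s ∧ s • v - w ∈ C₁}.Nonempty
  · obtain ⟨hA, hB⟩ := hne
    have hA₂ : {t : ℝ | 0 < t ∧ L w - t • L v ∈ C₂}.Nonempty :=
      let ⟨t, ht, hx⟩ := hA; ⟨t, ht, by simpa only [map_sub, map_smul] using hL _ hx⟩
    have hB₂ : {s : ℝ | 0 < s ∧ s • L v - L w ∈ C₂}.Nonempty :=
      let ⟨s, hs, hy⟩ := hB; ⟨s, hs, by simpa only [map_sub, map_smul] using hL _ hy⟩
    rw [projMetric_of_nonempty hA hB, projMetric_of_nonempty hA₂ hB₂,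
      ← ENNReal.ofReal_mul hc]
    refine ENNReal.ofReal_le_ofReal
      (le_mul_log_csInf_div_csSup hc hA hB (fun t ht => ht.1) (fun s hs => hs.1) ?_)
    rintro t ⟨ht, hx⟩ s ⟨-, hy⟩
    exact hC₂.log_coneB_div_coneA_le_of_projMetric_le (hL v hv) ht
      (by simpa only [map_sub, map_smul] using hL _ hx)
      (by simpa only [map_sub, map_smul] using hL _ hy) ENNReal.toReal_nonneg
      (by simpa only [map_sub, map_smul] using hbound _ hx _ hy)
  · rw [projMetric_of_not_nonempty hne]
    rcases eq_or_ne Δ 0 with rfl | hΔ0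
    · simpa using hbound v hv w hw
    · rw [ENNReal.mul_top (ENNReal.ofReal_pos.2 (sub_pos.2 (exp_lt_one_iff.2
        (neg_neg_of_pos (ENNReal.toReal_pos hΔ0 hΔfin))))).ne']
      exact le_top

/-- Birkhoff contraction: if `L(C₁) ⊆ C₂` and
`Δ = diam_{Θ₂}(L(C₁)) < ∞`, then `Θ₂(L v, L w) ≤ (1 − e^{−Δ})·Θ₁(v, w)`
for all `v, w ∈ C₁`. -/
theorem stmt7 {E₁ E₂ : Type*} [NormedAddCommGroup E₁] [NormedSpace ℝ E₁]
    [NormedAddCommGroup E₂] [NormedSpace ℝ E₂]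
    (C₁ : Set E₁) (C₂ : Set E₂)
    (hC₁ : IsConvexCone C₁) (hC₁c : IsClosedCone C₁)
    (hC₂ : IsConvexCone C₂) (hC₂c : IsClosedCone C₂)
    (L : E₁ →ₗ[ℝ] E₂) (hL : ∀ v ∈ C₁, L v ∈ C₂)
    (Δ : ℝ≥0∞)
    (hΔ : Δ = ⨆ v ∈ C₁, ⨆ w ∈ C₁, projMetric C₂ (L v) (L w))
    (hΔfin : Δ ≠ ⊤) :
    ∀ v ∈ C₁, ∀ w ∈ C₁,
      projMetric C₂ (L v) (L w) ≤
        ENNReal.ofReal (1 - Real.exp (-Δ.toReal)) * projMetric C₁ v w :=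
  stmt7_general C₁ C₂ hC₂ L hL Δ hΔ hΔfin
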